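/- (Strong completeness of SDI) Assume a decent triple (≼, ∧, P) and axioms A1, A2. If ⊢^d Γ → σ' is derivable in DI, then for every σ ∈ Ψ_d with P(σ∧σ') and for every sequentialisation r (an infinite binary tree with nodes labelled black or white prescribing the order of branch exploration), there exists σ'' ∈ Ψ_d with σ'' ≈ σ∧σ' such that σ → ⊢^d Γ → σ'' is derivable in SDI by a proof tree that follows r. -/

import Mathlib

/-- First-order terms: de Bruijn bound variables, eigenvariables,
meta-variables, and function symbols applied to argument lists. -/
inductive Tm : Type
| bv : ℕ → Tm
| ev : ℕ → Tm
| mv : ℕ → Tm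
| fn : ℕ → List Tm → Tm

/-- Substitute the term `u` for the bound variable of index `k`. -/
def Tm.bsub (k : ℕ) (u : Tm) : Tm → Tm
| bv i => if i = k then u else bv i
| ev i => ev i
| mv i => mv i
| fn f ts => fn f (ts.attach.map (fun ⟨t, _⟩ => Tm.bsub k u t))
termination_by t => sizeOf t
decreasing_by simp_wf; have := List.sizeOf_lt_of_mem ‹_›; omega

/-- Apply an instantiation of the meta-variables to a term. -/
def Tm.msub (ρ : ℕ → Tm) : Tm → Tm
| bv i => bv i
| ev i => ev i
| mv i => ρ i
| fn f ts => fn f (ts.attach.map (fun ⟨t, _⟩ => Tm.msub ρ t))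
termination_by t => sizeOf t
decreasing_by simp_wf; have := List.sizeOf_lt_of_mem ‹_›; omega

/-- Ground terms: built from eigenvariables and function symbols only. -/
inductive Tm.Ground : Tm → Prop
| ev (i : ℕ) : Ground (ev i)
| fn (f : ℕ) (ts : List Tm) : (∀ t ∈ ts, Ground t) → Ground (fn f ts)

/-- All eigenvariables of the term are `< ke` and all meta-variables are `< kx`
(and no de Bruijn variable occurs: the term is locally closed). -/
inductive Tm.VarsBelow (ke kx : ℕ) : Tm → Prop
| ev (i : ℕ) : i < ke → VarsBelow ke kx (ev i)
| mv (i : ℕ) : i < kx → VarsBelow ke kx (mv i)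
| fn (f : ℕ) (ts : List Tm) : (∀ t ∈ ts, VarsBelow ke kx t) → VarsBelow ke kx (fn f ts)

/-- The eigenvariable `y` occurs in the term. -/
inductive Tm.HasEv (y : ℕ) : Tm → Prop
| ev : HasEv y (ev y)
| fn (f : ℕ) (ts : List Tm) (t : Tm) : t ∈ ts → HasEv y t → HasEv y (fn f ts)

/-- Literals: a polarity, a predicate symbol, and a list of arguments. -/
abbrev Lit : Type := Bool × ℕ × List Tm

/-- Apply an instantiation of the meta-variables to a literal. -/
def Lit.msub (ρ : ℕ → Tm) (l : Lit) : Lit := (l.1, l.2.1, l.2.2.map (Tm.msub ρ))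

/-- First-order formulae in negation normal form. -/
inductive Fm : Type
| lit : Bool → ℕ → List Tm → Fm
| conj : Fm → Fm → Fm
| disj : Fm → Fm → Fm
| all : Fm → Fm
| ex : Fm → Fm

def Fm.bsub (k : ℕ) (u : Tm) : Fm → Fm
| lit b p ts => lit b p (ts.map (Tm.bsub k u))
| conj A B => conj (A.bsub k u) (B.bsub k u)
| disj A B => disj (A.bsub k u) (B.bsub k u)
| all A => all (A.bsub (k+1) u)
| ex A => ex (A.bsub (k+1) u)

/-- `A.opn u` is `A[x := u]`: the body of a quantifier, opened with the term `u`. -/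
def Fm.opn (u : Tm) (A : Fm) : Fm := A.bsub 0 u

/-- Apply an instantiation of the meta-variables to a formula. -/
def Fm.msub (ρ : ℕ → Tm) : Fm → Fm
| lit b p ts => lit b p (ts.map (Tm.msub ρ))
| conj A B => conj (A.msub ρ) (B.msub ρ)
| disj A B => disj (A.msub ρ) (B.msub ρ)
| all A => all (A.msub ρ)
| ex A => ex (A.msub ρ)

/-- All free variables of the formula are declared: eigenvariables `< ke`,
meta-variables `< kx`. -/
inductive Fm.VarsBelow (ke kx : ℕ) : Fm → Prop
| lit (b : Bool) (p : ℕ) (ts : List Tm) : (∀ t ∈ ts, Tm.VarsBelow ke kx t) → VarsBelow ke kx (lit b p ts)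
| conj {A B} : VarsBelow ke kx A → VarsBelow ke kx B → VarsBelow ke kx (conj A B)
| disj {A B} : VarsBelow ke kx A → VarsBelow ke kx B → VarsBelow ke kx (disj A B)
| all {A} : VarsBelow ke kx A → VarsBelow ke kx (all A)
| ex {A} : VarsBelow ke kx A → VarsBelow ke kx (ex A)

/-- The eigenvariable `y` occurs (free) in the formula. -/
inductive Fm.HasEv (y : ℕ) : Fm → Prop
| lit (b : Bool) (p : ℕ) (ts : List Tm) (t : Tm) : t ∈ ts → Tm.HasEv y t → HasEv y (lit b p ts)
| conjl {A B} : HasEv y A → HasEv y (conj A B)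
| conjr {A B} : HasEv y B → HasEv y (conj A B)
| disjl {A B} : HasEv y A → HasEv y (disj A B)
| disjr {A B} : HasEv y B → HasEv y (disj A B)
| all {A} : HasEv y A → HasEv y (all A)
| ex {A} : HasEv y A → HasEv y (ex A)

/-- The set of literals of a context. -/
def lits (Γ : Multiset Fm) : Set Lit := {l | Fm.lit l.1 l.2.1 l.2.2 ∈ Γ}

/-- Domains: the initial domain, extended by fresh eigenvariables and
fresh meta-variables. -/
inductive Dom : Type
| init : Dom
| addE : Dom → Dom
| addX : Dom → Dom

/-- Number of declared eigenvariables. -/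
def Dom.numE : Dom → ℕ
| init => 0
| addE d => d.numE + 1
| addX d => d.numE

/-- Number of declared meta-variables. -/
@[reducible] def Dom.numX : Dom → ℕ
| init => 0
| addE d => d.numX
| addX d => d.numX + 1

/-- A term of domain `d` that is ground: only eigenvariables of `d`. -/
def TmOfDom (d : Dom) (t : Tm) : Prop := Tm.VarsBelow d.numE 0 t

/-- A formula of domain `d`. -/
def FmOfDom (d : Dom) (A : Fm) : Prop := Fm.VarsBelow d.numE d.numX A

/-- A context of domain `d`. -/
def CtxOfDom (d : Dom) (Γ : Multiset Fm) : Prop := ∀ A ∈ Γ, FmOfDom d A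

/-- Instantiations of domain `d`: each meta-variable declared in `d` is mapped
to a ground term over the eigenvariables declared before it. -/
def InstOK : Dom → (ℕ → Tm) → Prop
| .init, _ => True
| .addE d, ρ => InstOK d ρ
| .addX d, ρ => InstOK d ρ ∧ TmOfDom d (ρ d.numX)

/-- Extend an instantiation with the term `t` for the meta-variable `n`. -/
def extend (ρ : ℕ → Tm) (n : ℕ) (t : Tm) : ℕ → Tm := fun i => if i = n then t else ρ i

/-- The empty instantiation (of the initial domain, which declares no
meta-variables, so that the values below are irrelevant). -/
def emptyInst : ℕ → Tm := fun _ => Tm.fn 0 []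
/-- The constraint-producing sequent calculus `DI`, parameterised by the
constraint sets `Psi` (indexed by the number of declared meta-variables),
the meet operator, the projections, and the constraint-producing predicate
`bbc` of the background reasoner. `DI d Γ σ` is the sequent `⊢^d Γ → σ`. -/
inductive DI (Psi : ℕ → Type) (meet : ∀ {n}, Psi n → Psi n → Psi n)
    (proj : ∀ {n}, Psi (n+1) → Psi n)
    (bbc : ∀ d : Dom, Set Lit → Psi d.numX → Prop) :
    ∀ d : Dom, Multiset Fm → Psi d.numX → Prop
| ax {d : Dom} (Γ : Multiset Fm) (σ : Psi d.numX) :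
    bbc d (lits Γ) σ → DI Psi meet proj bbc d Γ σ
| conj {d : Dom} {Γ A B} {σ σ' : Psi d.numX} :
    DI Psi meet proj bbc d (A ::ₘ Γ) σ → DI Psi meet proj bbc d (B ::ₘ Γ) σ' →
    DI Psi meet proj bbc d (Fm.conj A B ::ₘ Γ) (meet σ σ')
| disj {d : Dom} {Γ A B} {σ : Psi d.numX} :
    DI Psi meet proj bbc d (A ::ₘ B ::ₘ Γ) σ →
    DI Psi meet proj bbc d (Fm.disj A B ::ₘ Γ) σ
| ex {d : Dom} {Γ A} {σ : Psi (d.numX + 1)} :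
    DI Psi meet proj bbc d.addX (Fm.opn (Tm.mv d.numX) A ::ₘ Fm.ex A ::ₘ Γ) σ →
    DI Psi meet proj bbc d (Fm.ex A ::ₘ Γ) (proj σ)
| all {d : Dom} {Γ A} {σ : Psi d.numX} :
    DI Psi meet proj bbc d.addE (Fm.opn (Tm.ev d.numE) A ::ₘ Γ) σ →
    DI Psi meet proj bbc d (Fm.all A ::ₘ Γ) σ
/-- Proof trees of the constraint-refining sequent calculus `SDI`, as data
(`Type`-valued), so that the sequentialisation followed by a proof tree can be
read off. `SDIT d σ Γ σ'` is the sequent `σ → ⊢^d Γ → σ'`; the constructors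
`conj0`/`conj1` record which conjunct is explored first (`i = 0` or `i = 1`),
the first premiss being the branch explored first. -/
inductive SDIT (Psi : ℕ → Type) (proj : ∀ {n}, Psi (n+1) → Psi n)
    (lift : ∀ {n}, Psi n → Psi (n+1))
    (bbr : ∀ d : Dom, Psi d.numX → Set Lit → Psi d.numX → Prop) :
    ∀ d : Dom, Psi d.numX → Multiset Fm → Psi d.numX → Type
| ax {d : Dom} (σ : Psi d.numX) (Γ : Multiset Fm) (σ' : Psi d.numX) :
    bbr d σ (lits Γ) σ' → SDIT Psi proj lift bbr d σ Γ σ'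
| conj0 {d : Dom} {Γ : Multiset Fm} {A B : Fm} {σ σ'' σ' : Psi d.numX} :
    SDIT Psi proj lift bbr d σ (A ::ₘ Γ) σ'' →
    SDIT Psi proj lift bbr d σ'' (B ::ₘ Γ) σ' →
    SDIT Psi proj lift bbr d σ (Fm.conj A B ::ₘ Γ) σ'
| conj1 {d : Dom} {Γ : Multiset Fm} {A B : Fm} {σ σ'' σ' : Psi d.numX} :
    SDIT Psi proj lift bbr d σ (B ::ₘ Γ) σ'' →
    SDIT Psi proj lift bbr d σ'' (A ::ₘ Γ) σ' →
    SDIT Psi proj lift bbr d σ (Fm.conj A B ::ₘ Γ) σ'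
| disj {d : Dom} {Γ : Multiset Fm} {A B : Fm} {σ σ' : Psi d.numX} :
    SDIT Psi proj lift bbr d σ (A ::ₘ B ::ₘ Γ) σ' →
    SDIT Psi proj lift bbr d σ (Fm.disj A B ::ₘ Γ) σ'
| ex {d : Dom} {Γ : Multiset Fm} {A : Fm} {σ : Psi d.numX} {σ' : Psi (d.numX + 1)} :
    SDIT Psi proj lift bbr d.addX (lift σ) (Fm.opn (Tm.mv d.numX) A ::ₘ Fm.ex A ::ₘ Γ) σ' →
    SDIT Psi proj lift bbr d σ (Fm.ex A ::ₘ Γ) (proj σ')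
| all {d : Dom} {Γ : Multiset Fm} {A : Fm} {σ σ' : Psi d.numX} :
    SDIT Psi proj lift bbr d.addE σ (Fm.opn (Tm.ev d.numE) A ::ₘ Γ) σ' →
    SDIT Psi proj lift bbr d σ (Fm.all A ::ₘ Γ) σ'

/-- A sequentialisation is an infinite binary tree with black/white nodes,
represented as a function from paths to colours (`false` = white,
`true` = black). -/
abbrev Seqtln : Type := List Bool → Bool

/-- The left immediate subtree of a sequentialisation. -/
def Seqtln.left (r : Seqtln) : Seqtln := fun p => r (false :: p)
/-- The right immediate subtree of a sequentialisation. -/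
def Seqtln.right (r : Seqtln) : Seqtln := fun p => r (true :: p)

/-- The proof tree follows the sequentialisation `r`: zero-premiss rules follow
any `r`; a one-premiss rule follows `r` if its sub-proof does; for the
conjunction rule, the branch explored first follows the left subtree of `r`,
the other follows the right subtree, and the first conjunct is explored first
(`i = 0`, `conj0`) exactly when the root of `r` is white (`false`). -/
def Follows {Psi : ℕ → Type} {proj : ∀ {n}, Psi (n+1) → Psi n}
    {lift : ∀ {n}, Psi n → Psi (n+1)}
    {bbr : ∀ d : Dom, Psi d.numX → Set Lit → Psi d.numX → Prop} :
    ∀ {d : Dom} {σ : Psi d.numX} {Γ : Multiset Fm} {σ' : Psi d.numX},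
      SDIT Psi proj lift bbr d σ Γ σ' → Seqtln → Prop
| _, _, _, _, .ax _ _ _ _, _ => True
| _, _, _, _, .conj0 π₀ π₁, r => r [] = false ∧ Follows π₀ r.left ∧ Follows π₁ r.right
| _, _, _, _, .conj1 π₁ π₀, r => r [] = true ∧ Follows π₁ r.left ∧ Follows π₀ r.right
| _, _, _, _, .disj π, r => Follows π r
| _, _, _, _, .ex π, r => Follows π r
| _, _, _, _, .all π, r => Follows π r

section Decent
variable (Psi : ℕ → Type) (meet : ∀ {n}, Psi n → Psi n → Psi n)
  (proj : ∀ {n}, Psi (n+1) → Psi n) (lift : ∀ {n}, Psi n → Psi (n+1))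
  (pre : ∀ {n}, Psi n → Psi n → Prop) (P : ∀ {n}, Psi n → Prop)
  (bbc : ∀ d : Dom, Set Lit → Psi d.numX → Prop)
  (bbr : ∀ d : Dom, Psi d.numX → Set Lit → Psi d.numX → Prop)

/-- The equivalence generated by the pre-order `≼`. -/
def equ {n : ℕ} (σ σ' : Psi n) : Prop := pre σ σ' ∧ pre σ' σ

end Decent

/-! Induction on the `DI` derivation, threading the input constraint through the proof tree.
At a conjunction, the root colour of `r` says which branch goes first: it refines `σ` to
`τ ≈ σ ∧ σ₁`, the other branch refines `τ` to `υ ≈ τ ∧ σ₂ ≈ σ ∧ (σ₁ ∧ σ₂)`, since `∧` is a meet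
(up to `≈`). Every constraint met on the way lies above `σ ∧ σ'`, so `P` survives by P2.
At an existential, D2 trades the lifted constraint for the projected one and P1 moves `P`
back up. -/

structure IsMeetPreorder (Psi : ℕ → Type) (pre : ∀ {n}, Psi n → Psi n → Prop)
    (meet : ∀ {n}, Psi n → Psi n → Psi n) : Prop where
  refl : ∀ {n} (a : Psi n), pre a a
  trans : ∀ {n} {a b c : Psi n}, pre a b → pre b c → pre a c
  meet_le_left : ∀ {n} (a b : Psi n), pre (meet a b) a
  meet_le_right : ∀ {n} (a b : Psi n), pre (meet a b) b
  le_meet : ∀ {n} {a b c : Psi n}, pre c a → pre c b → pre c (meet a b)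

namespace IsMeetPreorder

variable {Psi : ℕ → Type} {pre : ∀ {n}, Psi n → Psi n → Prop}
  {meet : ∀ {n}, Psi n → Psi n → Psi n} {n : ℕ}

theorem equ_refl (h : IsMeetPreorder Psi pre meet) (a : Psi n) : equ Psi pre a a :=
  ⟨h.refl a, h.refl a⟩

theorem equ_trans (h : IsMeetPreorder Psi pre meet) {a b c : Psi n}
    (hab : equ Psi pre a b) (hbc : equ Psi pre b c) : equ Psi pre a c :=
  ⟨h.trans hab.1 hbc.1, h.trans hbc.2 hab.2⟩

theorem meet_mono (h : IsMeetPreorder Psi pre meet) {a a' b b' : Psi n}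
    (ha : pre a a') (hb : pre b b') : pre (meet a b) (meet a' b') :=
  h.le_meet (h.trans (h.meet_le_left a b) ha) (h.trans (h.meet_le_right a b) hb)

theorem equ_meet (h : IsMeetPreorder Psi pre meet) {a a' b b' : Psi n}
    (ha : equ Psi pre a a') (hb : equ Psi pre b b') : equ Psi pre (meet a b) (meet a' b') :=
  ⟨h.meet_mono ha.1 hb.1, h.meet_mono ha.2 hb.2⟩

theorem equ_meet_comm (h : IsMeetPreorder Psi pre meet) (a b : Psi n) :
    equ Psi pre (meet a b) (meet b a) :=
  ⟨h.le_meet (h.meet_le_right a b) (h.meet_le_left a b),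
    h.le_meet (h.meet_le_right b a) (h.meet_le_left b a)⟩

theorem equ_meet_assoc (h : IsMeetPreorder Psi pre meet) (a b c : Psi n) :
    equ Psi pre (meet (meet a b) c) (meet a (meet b c)) :=
  ⟨h.le_meet (h.trans (h.meet_le_left _ c) (h.meet_le_left a b))
      (h.meet_mono (h.meet_le_right a b) (h.refl c)),
    h.le_meet (h.meet_mono (h.refl a) (h.meet_le_left b c))
      (h.trans (h.meet_le_right a _) (h.meet_le_right b c))⟩

theorem equ_meet_assoc_of_equ (h : IsMeetPreorder Psi pre meet) {a b c τ υ : Psi n}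
    (hτ : equ Psi pre τ (meet a b)) (hυ : equ Psi pre υ (meet τ c)) :
    equ Psi pre υ (meet a (meet b c)) :=
  h.equ_trans (h.equ_trans hυ (h.equ_meet hτ (h.equ_refl c))) (h.equ_meet_assoc a b c)

theorem meet_meet_le_meet_left (h : IsMeetPreorder Psi pre meet) (a b c : Psi n) :
    pre (meet a (meet b c)) (meet a b) :=
  h.meet_mono (h.refl a) (h.meet_le_left b c)

theorem meet_meet_le_of_equ (h : IsMeetPreorder Psi pre meet) {a b c τ : Psi n}
    (hτ : equ Psi pre τ (meet a b)) : pre (meet a (meet b c)) (meet τ c) :=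
  h.trans (h.equ_meet_assoc a b c).2 (h.meet_mono hτ.2 (h.refl c))

end IsMeetPreorder

theorem DI.exists_SDIT_follows {Psi : ℕ → Type} {meet : ∀ {n}, Psi n → Psi n → Psi n}
    {proj : ∀ {n}, Psi (n+1) → Psi n} {lift : ∀ {n}, Psi n → Psi (n+1)}
    {pre : ∀ {n}, Psi n → Psi n → Prop} {P : ∀ {n}, Psi n → Prop}
    {bbc : ∀ d : Dom, Set Lit → Psi d.numX → Prop}
    {bbr : ∀ d : Dom, Psi d.numX → Set Lit → Psi d.numX → Prop}
    (hM : IsMeetPreorder Psi pre meet)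
    (D2 : ∀ {n} (σ : Psi n) (σ' σ'' : Psi (n+1)),
      equ Psi pre σ'' (meet (lift σ) σ') → equ Psi pre (proj σ'') (meet σ (proj σ')))
    (P1 : ∀ {n} (σ : Psi (n+1)), P (proj σ) → P σ)
    (P2 : ∀ {n} (σ σ' : Psi n), P σ → pre σ σ' → P σ')
    (A2 : ∀ (d : Dom) (A : Set Lit) (σ σ' : Psi d.numX), P (meet σ σ') → bbc d A σ' →
      ∃ σ'' : Psi d.numX, equ Psi pre σ'' (meet σ σ') ∧ bbr d σ A σ'')
    {d : Dom} {Γ : Multiset Fm} {σ' : Psi d.numX} (hder : DI Psi meet proj bbc d Γ σ')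
    (σ : Psi d.numX) (hP : P (meet σ σ')) (r : Seqtln) :
    ∃ (σ'' : Psi d.numX) (π : SDIT Psi proj lift bbr d σ Γ σ''),
      equ Psi pre σ'' (meet σ σ') ∧ Follows π r := by
  induction hder generalizing r with
  | ax Γ σ' hbbc =>
    obtain ⟨σ'', hσ'', hbbr⟩ := A2 _ _ σ σ' hP hbbc
    exact ⟨σ'', .ax σ Γ σ'' hbbr, hσ'', trivial⟩
  | @conj d Γ A B σ₁ σ₂ _ _ ih₁ ih₂ =>
    cases hr : r [] with
    | false =>
      obtain ⟨τ, π₁, hτ, hf₁⟩ := ih₁ σ (P2 _ _ hP (hM.meet_meet_le_meet_left σ σ₁ σ₂)) r.left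
      obtain ⟨υ, π₂, hυ, hf₂⟩ := ih₂ τ (P2 _ _ hP (hM.meet_meet_le_of_equ hτ)) r.right
      exact ⟨υ, .conj0 π₁ π₂, hM.equ_meet_assoc_of_equ hτ hυ, hr, hf₁, hf₂⟩
    | true =>
      have hswap := hM.equ_meet (hM.equ_refl σ) (hM.equ_meet_comm σ₂ σ₁)
      have hP' : P (meet σ (meet σ₂ σ₁)) := P2 _ _ hP hswap.2
      obtain ⟨τ, π₂, hτ, hf₂⟩ := ih₂ σ (P2 _ _ hP' (hM.meet_meet_le_meet_left σ σ₂ σ₁)) r.left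
      obtain ⟨υ, π₁, hυ, hf₁⟩ := ih₁ τ (P2 _ _ hP' (hM.meet_meet_le_of_equ hτ)) r.right
      exact ⟨υ, .conj1 π₂ π₁, hM.equ_trans (hM.equ_meet_assoc_of_equ hτ hυ) hswap,
        hr, hf₂, hf₁⟩
  | disj _ ih =>
    obtain ⟨τ, π, hτ, hf⟩ := ih σ hP r
    exact ⟨τ, .disj π, hτ, hf⟩
  | @ex d Γ A σ₁ _ ih =>
    have hP' : P (meet (lift σ) σ₁) :=
      P1 _ (P2 _ _ hP (D2 σ σ₁ _ (hM.equ_refl _)).2)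
    obtain ⟨τ, π, hτ, hf⟩ := ih (lift σ) hP' r
    exact ⟨proj τ, .ex π, D2 σ σ₁ τ hτ, hf⟩
  | all _ ih =>
    obtain ⟨τ, π, hτ, hf⟩ := ih σ hP r
    exact ⟨τ, .all π, hτ, hf⟩

theorem SDI_strong_complete_general (Psi : ℕ → Type) (meet : ∀ {n}, Psi n → Psi n → Psi n)
    (proj : ∀ {n}, Psi (n+1) → Psi n) (lift : ∀ {n}, Psi n → Psi (n+1))
    (pre : ∀ {n}, Psi n → Psi n → Prop) (P : ∀ {n}, Psi n → Prop)
    (bbc : ∀ d : Dom, Set Lit → Psi d.numX → Prop)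
    (bbr : ∀ d : Dom, Psi d.numX → Set Lit → Psi d.numX → Prop)
    (hrefl : ∀ {n} (σ : Psi n), pre σ σ)
    (htrans : ∀ {n} (σ σ' σ'' : Psi n), pre σ σ' → pre σ' σ'' → pre σ σ'')
    (D1 : ∀ {n} (σ σ' : Psi n), pre (meet σ σ') σ ∧ pre (meet σ σ') σ' ∧
      ∀ τ : Psi n, pre τ σ → pre τ σ' → pre τ (meet σ σ'))
    (D2 : ∀ {n} (σ : Psi n) (σ' σ'' : Psi (n+1)),
      equ Psi (fun a b => pre a b) σ'' (meet (lift σ) σ') →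
      equ Psi (fun a b => pre a b) (proj σ'') (meet σ (proj σ')))
    (P1 : ∀ {n} (σ : Psi (n+1)), P σ ↔ P (proj σ))
    (P2 : ∀ {n} (σ σ' : Psi n), P σ → pre σ σ' → P σ')
    (A2 : ∀ (d : Dom) (A : Set Lit) (σ σ' : Psi d.numX),
      P (meet σ σ') → bbc d A σ' →
      ∃ σ'' : Psi d.numX, equ Psi (fun a b => pre a b) σ'' (meet σ σ') ∧
        bbr d σ A σ'')
    (d : Dom) (Γ : Multiset Fm) (σ' : Psi d.numX)
    (hder : DI Psi (fun a b => meet a b) (fun τ => proj τ) bbc d Γ σ')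
    (σ : Psi d.numX) (hP : P (meet σ σ')) (r : Seqtln) :
    ∃ (σ'' : Psi d.numX)
      (π : SDIT Psi (fun τ => proj τ) (fun τ => lift τ) bbr d σ Γ σ''),
      equ Psi (fun a b => pre a b) σ'' (meet σ σ') ∧ Follows π r := by
  have hM : IsMeetPreorder Psi pre meet :=
    { refl := hrefl
      trans := htrans _ _ _
      meet_le_left := fun a b => (D1 a b).1
      meet_le_right := fun a b => (D1 a b).2.1
      le_meet := fun ha hb => (D1 _ _).2.2 _ ha hb }
  exact hder.exists_SDIT_follows hM D2 (fun σ => (P1 σ).2) P2 A2 σ hP r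

/-- Strong completeness of `SDI`: assuming a decent triple `(≼, ∧, P)` and
axioms A1, A2: if `⊢^d Γ → σ'` is derivable in `DI`, then for every
`σ ∈ Ψ_d` with `P(σ∧σ')` and every sequentialisation `r` (an infinite binary
tree with black/white nodes prescribing the order of exploration of
conjunctive branches), there are `σ'' ≈ σ∧σ'` and a proof tree of
`σ → ⊢^d Γ → σ''` in `SDI` that follows `r`. -/
theorem SDI_strong_complete (Psi : ℕ → Type) (meet : ∀ {n}, Psi n → Psi n → Psi n)
    (proj : ∀ {n}, Psi (n+1) → Psi n) (lift : ∀ {n}, Psi n → Psi (n+1))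
    (pre : ∀ {n}, Psi n → Psi n → Prop) (P : ∀ {n}, Psi n → Prop)
    (bbc : ∀ d : Dom, Set Lit → Psi d.numX → Prop)
    (bbr : ∀ d : Dom, Psi d.numX → Set Lit → Psi d.numX → Prop)
    (hrefl : ∀ {n} (σ : Psi n), pre σ σ)
    (htrans : ∀ {n} (σ σ' σ'' : Psi n), pre σ σ' → pre σ' σ'' → pre σ σ'')
    (D1 : ∀ {n} (σ σ' : Psi n), pre (meet σ σ') σ ∧ pre (meet σ σ') σ' ∧
      ∀ τ : Psi n, pre τ σ → pre τ σ' → pre τ (meet σ σ'))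
    (D2 : ∀ {n} (σ : Psi n) (σ' σ'' : Psi (n+1)),
      equ Psi (fun a b => pre a b) σ'' (meet (lift σ) σ') →
      equ Psi (fun a b => pre a b) (proj σ'') (meet σ (proj σ')))
    (P1 : ∀ {n} (σ : Psi (n+1)), P σ ↔ P (proj σ))
    (P2 : ∀ {n} (σ σ' : Psi n), P σ → pre σ σ' → P σ')
    (A1 : ∀ (d : Dom) (A : Set Lit) (σ σ' : Psi d.numX), bbr d σ A σ' →
      ∃ σ'' : Psi d.numX, equ Psi (fun a b => pre a b) σ' (meet σ σ'') ∧
        P (meet σ σ'') ∧ bbc d A σ'')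
    (A2 : ∀ (d : Dom) (A : Set Lit) (σ σ' : Psi d.numX),
      P (meet σ σ') → bbc d A σ' →
      ∃ σ'' : Psi d.numX, equ Psi (fun a b => pre a b) σ'' (meet σ σ') ∧
        bbr d σ A σ'')
    (d : Dom) (Γ : Multiset Fm) (σ' : Psi d.numX)
    (hder : DI Psi (fun a b => meet a b) (fun τ => proj τ) bbc d Γ σ')
    (σ : Psi d.numX) (hP : P (meet σ σ')) (r : Seqtln) :
    ∃ (σ'' : Psi d.numX)
      (π : SDIT Psi (fun τ => proj τ) (fun τ => lift τ) bbr d σ Γ σ''),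
      equ Psi (fun a b => pre a b) σ'' (meet σ σ') ∧ Follows π r :=
  SDI_strong_complete_general Psi meet proj lift pre P bbc bbr hrefl htrans D1 D2 P1 P2 A2 d Γ σ'
    hder σ hP r
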